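/- Let E be an elliptic curve over F_q, d an integer coprime to q, and L_d the Lattès map satisfying L_d(x(P)) = x(dP) for all points P. Then a ∈ P^1(F_q) is periodic under L_d if and only if a = x(P) for some point P ∈ E(F_{q^2}) whose order is coprime to d. -/

import Mathlib

/-!
Over the quadratic extension `K` every `a ∈ P^1(F)` is the `x`-coordinate of some point `P`,
because the equation of `E` at `x = a` is a quadratic in `y` and every quadratic over `F` has a
root in `K`. Since `L_d` is semiconjugate to multiplication by `d` through `x`, and `x` only
identifies `P` with `-P`, the point `a = x(P)` is periodic under `L_d` iff `d^m • P = P` for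
some `m ≥ 1`, i.e. iff `d` is a unit modulo the order of `P`.
-/

open WeierstrassCurve WeierstrassCurve.Affine

/-- The x-coordinate projection from the points of a Weierstrass curve to the projective line,
modeled as `Option`: the point at infinity maps to `none` (that is, `∞`), and an affine point
`(a, b)` maps to `some a`. -/
def xCoord {R : Type*} [CommRing R] {W : WeierstrassCurve.Affine R} : W.Point → Option R
  | .zero => none
  | .some (x := x) _ _ => some x

/-- The embedding of `P^1(F)` into `P^1(K)` induced by a field extension `F → K`;
`none` is the point at infinity. -/
def p1Emb (F K : Type*) [Field F] [Field K] [Algebra F K] : Option F → Option K :=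
  Option.map (algebraMap F K)

open Function Polynomial

theorem mem_periodicPts_zsmul_iff {G : Type*} [AddGroup G] (d : ℤ) (P : G) :
    P ∈ periodicPts (d • · : G → G) ↔ (addOrderOf P).Coprime d.natAbs := by
  have isPeriodicPt_iff (m : ℕ) :
      IsPeriodicPt (d • ·) m P ↔ (d : ZMod (addOrderOf P)) ^ m = 1 := by
    rw [IsPeriodicPt, IsFixedPt, smul_iterate_apply, ← Int.cast_pow, ← Int.cast_one,
      ZMod.intCast_eq_intCast_iff, ← zsmul_eq_zsmul_iff_modEq, one_zsmul]
  calc P ∈ periodicPts (d • ·) ↔ IsOfFinOrder (d : ZMod (addOrderOf P)) := by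
        simp only [mem_periodicPts, isPeriodicPt_iff, isOfFinOrder_iff_pow_eq_one]
    _ ↔ IsCoprime (addOrderOf P : ℤ) d := by
        rw [isOfFinOrder_iff_isUnit, ZMod.coe_int_isUnit_iff_isCoprime]
    _ ↔ (addOrderOf P).Coprime d.natAbs := Int.isCoprime_iff_gcd_eq_one

theorem eq_or_eq_neg_of_xCoord_eq {F : Type*} [Field F] {W : Affine F} {P Q : W.Point}
    (h : xCoord P = xCoord Q) : P = Q ∨ P = -Q := by
  rcases P with _ | @⟨x₁, y₁, h₁⟩ <;> rcases Q with _ | @⟨x₂, y₂, h₂⟩ <;>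
    simp only [xCoord, reduceCtorEq, Option.some.injEq] at h
  · exact .inl rfl
  · subst h
    rcases Y_eq_of_X_eq h₁.1 h₂.1 rfl with rfl | rfl
    · exact .inl rfl
    · exact .inr rfl

theorem xCoord_mem_periodicPts_iff {F : Type*} [Field F] [DecidableEq F] {W : Affine F} {d : ℤ}
    {L : Option F → Option F} (hL : Semiconj (xCoord (W := W)) (d • ·) L) (P : W.Point) :
    xCoord P ∈ periodicPts L ↔ P ∈ periodicPts (d • · : W.Point → W.Point) := by
  refine ⟨fun ⟨m, hm, hP⟩ ↦ ?_, fun ⟨m, hm, hP⟩ ↦ ⟨m, hm, hP.map hL⟩⟩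
  rcases eq_or_eq_neg_of_xCoord_eq ((hL.iterate_right m P).trans hP) with h | h
  · exact ⟨m, hm, h⟩
  · refine ⟨m + m, by omega, ?_⟩
    have hneg : Function.Commute (d • · : W.Point → W.Point)^[m] Neg.neg :=
      Function.Commute.iterate_left (fun Q ↦ smul_neg d Q) m
    rw [IsPeriodicPt, IsFixedPt, iterate_add_apply, h, hneg.eq, h, neg_neg]

theorem finrank_eq_two_of_card_eq_sq {F K : Type*} [Field F] [Fintype F] [Field K] [Fintype K]
    [Algebra F K] (hK : Fintype.card K = Fintype.card F ^ 2) : Module.finrank F K = 2 :=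
  Nat.pow_right_injective Fintype.one_lt_card
    ((Module.card_eq_pow_finrank (K := F) (V := K)).symm.trans hK)

section FiniteExtension

variable {F K : Type*} [Field F] [Field K] [Algebra F K] [Finite K]

theorem Polynomial.exists_aeval_eq_zero_of_natDegree_dvd_finrank {p : F[X]} (hp : Irreducible p)
    (h : p.natDegree ∣ Module.finrank F K) : ∃ x : K, aeval x p = 0 := by
  have := Fact.mk hp
  have hrank : Module.finrank F (AdjoinRoot p) = p.natDegree :=
    (AdjoinRoot.powerBasis hp.ne_zero).finrank
  obtain ⟨φ⟩ := FiniteField.nonempty_algHom_of_finrank_dvd (hrank ▸ h)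
  exact ⟨φ (AdjoinRoot.root p), by
    rw [aeval_algHom_apply, AdjoinRoot.aeval_eq, AdjoinRoot.mk_self, map_zero]⟩

theorem Polynomial.exists_aeval_eq_zero_of_natDegree_eq_two {p : F[X]} (hp : p.natDegree = 2)
    (hK : 2 ∣ Module.finrank F K) : ∃ x : K, aeval x p = 0 := by
  have hp0 : p ≠ 0 := ne_zero_of_natDegree_gt (n := 0) (by omega)
  obtain ⟨g, hg, hgp⟩ :=
    WfDvdMonoid.exists_irreducible_factor (not_isUnit_of_natDegree_pos p (by omega)) hp0
  have hg_le : g.natDegree ≤ 2 := hp ▸ natDegree_le_of_dvd hgp hp0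
  have hg_pos : 0 < g.natDegree := natDegree_pos_iff_degree_pos.mpr (degree_pos_of_irreducible hg)
  have hg_dvd : g.natDegree ∣ Module.finrank F K := by
    interval_cases g.natDegree
    · exact one_dvd _
    · exact hK
  obtain ⟨x, hx⟩ := exists_aeval_eq_zero_of_natDegree_dvd_finrank hg hg_dvd
  exact ⟨x, aeval_eq_zero_of_dvd_aeval_eq_zero hgp hx⟩

theorem WeierstrassCurve.exists_equation_baseChange (hK : 2 ∣ Module.finrank F K)
    (E : WeierstrassCurve F) (x : F) :
    ∃ y : K, (E.baseChange K).toAffine.Equation (algebraMap F K x) y := by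
  obtain ⟨y, hy⟩ := exists_aeval_eq_zero_of_natDegree_eq_two (K := K)
    (p := X ^ 2 + C (E.a₁ * x + E.a₃) * X - C (x ^ 3 + E.a₂ * x ^ 2 + E.a₄ * x + E.a₆))
    (by compute_degree!) hK
  refine ⟨y, (equation_iff ..).mpr ?_⟩
  simp only [map_sub, map_add, map_mul, map_pow, aeval_X, aeval_C] at hy
  simp only [WeierstrassCurve.baseChange, map_a₁, map_a₂, map_a₃, map_a₄, map_a₆]
  linear_combination hy

theorem WeierstrassCurve.exists_xCoord_eq_p1Emb (hK : 2 ∣ Module.finrank F K)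
    (E : WeierstrassCurve F) [E.IsElliptic] :
    ∀ a : Option F, ∃ P : Affine.Point (E.baseChange K), xCoord P = p1Emb F K a
  | none => ⟨0, rfl⟩
  | some x => by
    have : (E.baseChange K).IsElliptic := inferInstanceAs (E.map (algebraMap F K)).IsElliptic
    obtain ⟨y, hy⟩ := E.exists_equation_baseChange hK x
    exact ⟨.some _ _ (equation_iff_nonsingular.mp hy), rfl⟩

end FiniteExtension

open Classical in
theorem lattes_periodic_iff_general
    {F : Type*} [Field F] [Fintype F] {K : Type*} [Field K] [Fintype K] [Algebra F K]
    (hK : Fintype.card K = (Fintype.card F) ^ 2)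
    (E : WeierstrassCurve F) [E.IsElliptic]
    (d : ℤ)
    (Ld : Option K → Option K) (hLd : ∀ P : Affine.Point (E.baseChange K), Ld (xCoord P) = xCoord (d • P)) :
    ∀ a : Option F,
      (∃ m : ℕ, 1 ≤ m ∧ Ld^[m] (p1Emb F K a) = p1Emb F K a) ↔
        ∃ P : Affine.Point (E.baseChange K), xCoord P = p1Emb F K a ∧ (addOrderOf P).Coprime d.natAbs := by
  have hperiodic (P : Affine.Point (E.baseChange K)) :
      xCoord P ∈ periodicPts Ld ↔ (addOrderOf P).Coprime d.natAbs :=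
    (xCoord_mem_periodicPts_iff (fun Q ↦ (hLd Q).symm) P).trans (mem_periodicPts_zsmul_iff d P)
  intro a
  obtain ⟨P₀, hP₀⟩ :=
    E.exists_xCoord_eq_p1Emb (K := K) (finrank_eq_two_of_card_eq_sq hK ▸ dvd_rfl) a
  change p1Emb F K a ∈ periodicPts Ld ↔ _
  constructor
  · intro ha
    exact ⟨P₀, hP₀, (hperiodic P₀).mp (hP₀ ▸ ha)⟩
  · rintro ⟨P, hP, hcop⟩
    exact hP ▸ (hperiodic P).mpr hcop

open Classical in
/-- Let `E` be an elliptic curve over a finite field `F` with `q` elements, `K/F` the quadratic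
extension, `d` an integer coprime to `q`, and `L_d` the Lattès map of `E`, i.e. a self-map of
`P^1(K)` satisfying `L_d (x P) = x (d • P)` for all points `P ∈ E(K)`. Then `a ∈ P^1(F)` is
periodic under `L_d` if and only if `a = x P` for some `P ∈ E(K)` of order coprime to `d`. -/
theorem lattes_periodic_iff
    {F : Type*} [Field F] [Fintype F] {K : Type*} [Field K] [Fintype K] [Algebra F K]
    (hK : Fintype.card K = (Fintype.card F) ^ 2)
    (E : WeierstrassCurve F) [E.IsElliptic]
    (d : ℤ) (hd : Int.gcd d (Fintype.card F) = 1)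
    (Ld : Option K → Option K) (hLd : ∀ P : Affine.Point (E.baseChange K), Ld (xCoord P) = xCoord (d • P)) :
    ∀ a : Option F,
      (∃ m : ℕ, 1 ≤ m ∧ Ld^[m] (p1Emb F K a) = p1Emb F K a) ↔
        ∃ P : Affine.Point (E.baseChange K), xCoord P = p1Emb F K a ∧ (addOrderOf P).Coprime d.natAbs :=
  lattes_periodic_iff_general hK E d Ld hLd
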